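/- Let ψ: ℝ → (−∞, +∞] be defined by ψ(t) = φ(t) for t ∈ [0,1] and ψ(t) = +∞ otherwise, where φ is a proper lower semicontinuous convex function on ℝ with [0,1] ⊆ int(dom φ). Then for any matrix X and any ρ > 0, sup_{W ∈ 𝕏} { ⟨W, ρX⟩ − ∑_{i=1}^n ψ(σ_i(W)) } = ∑_{i=1}^n ψ*(ρ·σ_i(X)), where ψ* is the Fenchel conjugate of ψ. -/

import Mathlib

/-- Singular values of a real `n × m` matrix (in some order). -/
noncomputable def singVals {n m : ℕ} (X : Matrix (Fin n) (Fin m) ℝ) (i : Fin n) : ℝ :=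
  Real.sqrt ((Matrix.isHermitian_mul_conjTranspose_self X).eigenvalues i)

/-- The trace (Frobenius) inner product of two real matrices. -/
def minner {n m : ℕ} (A B : Matrix (Fin n) (Fin m) ℝ) : ℝ :=
  ∑ i, ∑ j, A i j * B i j

/-- The Fenchel conjugate `ψ*` of the function `ψ` equal to `φ` on `[0,1]` and `+∞`
elsewhere: `ψ*(s) = sup_{t ∈ [0,1]} (s·t − φ(t))`. -/
noncomputable def psiStar (φ : ℝ → ℝ) (s : ℝ) : ℝ :=
  sSup {v : ℝ | ∃ t ∈ Set.Icc (0:ℝ) 1, v = s * t - φ t}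

/-!
Write `X = U Σ_X Vᵀ` and `W = P Σ_W Qᵀ` (singular value decompositions). Then
`⟨W, X⟩ = ∑_{i,k} G_{ik} K_{ki} σ_i(X) σ_k(W)`, where `G = UᵀP` is orthogonal and `K` is a square
block of the orthogonal matrix `QᵀV`. By AM-GM, `|G_{ik} K_{ki}| ≤ (G_{ik}² + K_{ki}²)/2`, which is
doubly substochastic and hence bounded entrywise by a doubly stochastic `D`. As the columns of `D`
sum to one, `⟨W, ρX⟩ - ∑_k φ(σ_k(W)) ≤ ∑_{i,k} D_{ik} (ρσ_i(X)σ_k(W) - φ(σ_k(W)))`, each bracket is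
at most `ψ*(ρσ_i(X))` because `σ_k(W) ∈ [0,1]`, and the rows of `D` sum to one. Equality holds for
`W = U diag(τ) Vᵀ` with `τ_i ∈ [0,1]` a maximiser in the definition of `ψ*(ρσ_i(X))`.
-/

open Matrix Set

lemma isGreatest_psiStar {φ : ℝ → ℝ} (hφ : ContinuousOn φ (Icc 0 1)) (s : ℝ) :
    IsGreatest {v : ℝ | ∃ t ∈ Icc (0:ℝ) 1, v = s * t - φ t} (psiStar φ s) := by
  have himage : {v : ℝ | ∃ t ∈ Icc (0:ℝ) 1, v = s * t - φ t}
      = (fun t => s * t - φ t) '' Icc 0 1 := by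
    ext v; simp only [mem_ofPred_eq, mem_image, eq_comm]
  rw [psiStar, himage]
  exact (isCompact_Icc.image_of_continuousOn
    ((continuousOn_const.mul continuousOn_id).sub hφ)).isGreatest_sSup
    ((nonempty_Icc.mpr zero_le_one).image _)

lemma mul_sub_le_psiStar {φ : ℝ → ℝ} (hφ : ContinuousOn φ (Icc 0 1)) (s : ℝ) {t : ℝ}
    (ht : t ∈ Icc (0:ℝ) 1) : s * t - φ t ≤ psiStar φ s :=
  (isGreatest_psiStar hφ s).2 ⟨t, ht, rfl⟩

section DoublyStochastic

variable {ι : Type*} [Fintype ι] [DecidableEq ι]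

lemma exists_mem_doublyStochastic_le {M : Matrix ι ι ℝ} (hM : ∀ i j, 0 ≤ M i j)
    (hrow : ∀ i, ∑ j, M i j ≤ 1) (hcol : ∀ j, ∑ i, M i j ≤ 1) :
    ∃ D ∈ doublyStochastic ℝ ι, ∀ i j, M i j ≤ D i j := by
  set r : ι → ℝ := fun i => 1 - ∑ j, M i j
  set c : ι → ℝ := fun j => 1 - ∑ i, M i j
  set s : ℝ := ∑ i, r i
  have hr : ∀ i, 0 ≤ r i := fun i => sub_nonneg.mpr (hrow i)
  have hc : ∀ j, 0 ≤ c j := fun j => sub_nonneg.mpr (hcol j)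
  have hcs : ∑ j, c j = s := by
    simp only [s, r, c, Finset.sum_sub_distrib]
    rw [Finset.sum_comm]
  have hs : 0 ≤ s := Finset.sum_nonneg fun i _ => hr i
  have hr0 : s = 0 → ∀ i, r i = 0 := fun h i =>
    (Finset.sum_eq_zero_iff_of_nonneg fun i _ => hr i).mp h i (Finset.mem_univ i)
  have hc0 : s = 0 → ∀ j, c j = 0 := fun h j =>
    (Finset.sum_eq_zero_iff_of_nonneg fun j _ => hc j).mp (hcs.trans h) j (Finset.mem_univ j)
  have hcancel : ∀ x, (s = 0 → x = 0) → x * s / s = x := fun x hx => by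
    rcases eq_or_ne s 0 with h | h
    · simp [hx h]
    · field_simp
  -- the defect `r i` of row `i` is spread over the columns in proportion to their defects `c j`
  refine ⟨M + Matrix.of fun i j => r i * c j / s, ?_, fun i j => ?_⟩
  · rw [mem_doublyStochastic_iff_sum]
    refine ⟨fun i j => ?_, fun i => ?_, fun j => ?_⟩
    · exact add_nonneg (hM i j) (div_nonneg (mul_nonneg (hr i) (hc j)) hs)
    · simp only [Matrix.add_apply, of_apply, Finset.sum_add_distrib, ← Finset.mul_sum,
        ← Finset.sum_div, hcs, hcancel _ fun h => hr0 h i, r, add_sub_cancel]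
    · simp only [Matrix.add_apply, of_apply, Finset.sum_add_distrib, ← Finset.sum_mul,
        ← Finset.sum_div]
      rw [mul_comm, hcancel _ fun h => hc0 h j]
      simp only [c, add_sub_cancel]
  · simp only [Matrix.add_apply, of_apply, le_add_iff_nonneg_right]
    exact div_nonneg (mul_nonneg (hr i) (hc j)) hs

lemma exists_mem_doublyStochastic_abs_mul_le {A B : Matrix ι ι ℝ}
    (hArow : ∀ i, ∑ k, A i k ^ 2 ≤ 1) (hAcol : ∀ k, ∑ i, A i k ^ 2 ≤ 1)
    (hBrow : ∀ k, ∑ i, B k i ^ 2 ≤ 1) (hBcol : ∀ i, ∑ k, B k i ^ 2 ≤ 1) :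
    ∃ D ∈ doublyStochastic ℝ ι, ∀ i k, |A i k * B k i| ≤ D i k := by
  obtain ⟨D, hD, hND⟩ := exists_mem_doublyStochastic_le
    (M := Matrix.of fun i k => (A i k ^ 2 + B k i ^ 2) / 2)
    (fun i k => by rw [of_apply]; positivity)
    (fun i => by
      simp only [of_apply, ← Finset.sum_div, Finset.sum_add_distrib]
      linarith [hArow i, hBcol i])
    (fun k => by
      simp only [of_apply, ← Finset.sum_div, Finset.sum_add_distrib]
      linarith [hAcol k, hBrow k])
  refine ⟨D, hD, fun i k => le_trans ?_ (hND i k)⟩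
  have := two_mul_le_add_sq |A i k| |B k i|
  rw [sq_abs, sq_abs] at this
  rw [of_apply, abs_mul]
  linarith

lemma sum_mul_sub_le_sum_psiStar {φ : ℝ → ℝ} (hφ : ContinuousOn φ (Icc 0 1))
    {D M : Matrix ι ι ℝ} (hD : D ∈ doublyStochastic ℝ ι) (hMD : ∀ i k, |M i k| ≤ D i k)
    {s t : ι → ℝ} (hs : ∀ i, 0 ≤ s i) (ht : ∀ k, t k ∈ Icc (0:ℝ) 1) :
    ∑ i, ∑ k, M i k * (s i * t k) - ∑ k, φ (t k) ≤ ∑ i, psiStar φ (s i) := by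
  have hφsum : ∑ k, φ (t k) = ∑ i, ∑ k, D i k * φ (t k) := by
    rw [Finset.sum_comm]
    simp only [← Finset.sum_mul, sum_col_of_mem_doublyStochastic hD, one_mul]
  calc ∑ i, ∑ k, M i k * (s i * t k) - ∑ k, φ (t k)
      ≤ ∑ i, ∑ k, D i k * (s i * t k) - ∑ i, ∑ k, D i k * φ (t k) := by
        rw [hφsum]
        gcongr with i _ k _
        · exact mul_nonneg (hs i) (ht k).1
        · exact (le_abs_self _).trans (hMD i k)
    _ = ∑ i, ∑ k, D i k * (s i * t k - φ (t k)) := by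
        simp only [mul_sub, Finset.sum_sub_distrib]
    _ ≤ ∑ i, ∑ k, D i k * psiStar φ (s i) := by
        gcongr with i _ k _
        · exact nonneg_of_mem_doublyStochastic hD
        · exact mul_sub_le_psiStar hφ (s i) (ht k)
    _ = ∑ i, psiStar φ (s i) := by
        simp only [← Finset.sum_mul, sum_row_of_mem_doublyStochastic hD, one_mul]

end DoublyStochastic

section Orthogonal

variable {ι κ : Type*} [Fintype ι] [Fintype κ] [DecidableEq κ] {K : Matrix κ κ ℝ}

lemma transpose_mul_mem_orthogonalGroup {L : Matrix κ κ ℝ} (hK : K ∈ orthogonalGroup κ ℝ)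
    (hL : L ∈ orthogonalGroup κ ℝ) : Kᵀ * L ∈ orthogonalGroup κ ℝ := by
  rw [mem_orthogonalGroup_iff, transpose_mul, transpose_transpose, Matrix.mul_assoc,
    ← Matrix.mul_assoc L, (mem_orthogonalGroup_iff _ ℝ).mp hL, Matrix.one_mul,
    (mem_orthogonalGroup_iff' _ ℝ).mp hK]

lemma sum_sq_row_of_mem_orthogonalGroup (hK : K ∈ orthogonalGroup κ ℝ) (i : κ) :
    ∑ j, K i j ^ 2 = 1 := by
  simpa [mul_apply, sq] using congr_fun₂ ((mem_orthogonalGroup_iff κ ℝ).mp hK) i i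

lemma sum_sq_col_of_mem_orthogonalGroup (hK : K ∈ orthogonalGroup κ ℝ) (j : κ) :
    ∑ i, K i j ^ 2 = 1 := by
  simpa [mul_apply, sq] using congr_fun₂ ((mem_orthogonalGroup_iff' κ ℝ).mp hK) j j

lemma sum_sq_submatrix_row_le_one (hK : K ∈ orthogonalGroup κ ℝ) {ι' : Type*} (e : ι' → κ)
    (f : ι ↪ κ) (i : ι') : ∑ j, K.submatrix e f i j ^ 2 ≤ 1 := by
  rw [← sum_sq_row_of_mem_orthogonalGroup hK (e i)]
  calc ∑ j, K (e i) (f j) ^ 2 = ∑ l ∈ Finset.univ.map f, K (e i) l ^ 2 :=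
        (Finset.sum_map _ f fun l => K (e i) l ^ 2).symm
    _ ≤ ∑ l, K (e i) l ^ 2 := Finset.sum_le_univ_sum_of_nonneg fun _ => sq_nonneg _

lemma sum_sq_submatrix_col_le_one (hK : K ∈ orthogonalGroup κ ℝ) {ι' : Type*} (e : ι ↪ κ)
    (f : ι' → κ) (j : ι') : ∑ i, K.submatrix e f i j ^ 2 ≤ 1 := by
  rw [← sum_sq_col_of_mem_orthogonalGroup hK (f j)]
  calc ∑ i, K (e i) (f j) ^ 2 = ∑ l ∈ Finset.univ.map e, K l (f j) ^ 2 :=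
        (Finset.sum_map _ e fun l => K l (f j) ^ 2).symm
    _ ≤ ∑ l, K l (f j) ^ 2 := Finset.sum_le_univ_sum_of_nonneg fun _ => sq_nonneg _

lemma map_eigenvalues_eq_of_eq_conj {A : Matrix κ κ ℝ} (hA : A.IsHermitian)
    (hK : K ∈ orthogonalGroup κ ℝ) {d : κ → ℝ} (h : A = K * diagonal d * Kᵀ) :
    Multiset.map hA.eigenvalues Finset.univ.val = Multiset.map d Finset.univ.val := by
  have hroots : A.charpoly.roots = Multiset.map d Finset.univ.val := by
    rw [h, charpoly_mul_comm, ← Matrix.mul_assoc, (mem_orthogonalGroup_iff' _ ℝ).mp hK,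
      Matrix.one_mul, charpoly_diagonal, Polynomial.roots_prod]
    · simp
    · simp [Finset.prod_ne_zero_iff, Polynomial.X_sub_C_ne_zero]
  simpa [hroots] using hA.roots_charpoly_eq_eigenvalues.symm

end Orthogonal

lemma trace_mul_diagonal_mul_mul_diagonal {ι R : Type*} [Fintype ι] [DecidableEq ι]
    [CommSemiring R] (G K : Matrix ι ι R) (a b : ι → R) :
    trace (G * diagonal b * K * diagonal a) = ∑ i, ∑ k, G i k * K k i * (a i * b k) := by
  simp only [trace, diag, mul_apply, diagonal_apply, mul_ite, mul_zero,
    Finset.sum_ite_eq', Finset.mem_univ, if_true, Finset.sum_mul]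
  exact Finset.sum_congr rfl fun i _ => Finset.sum_congr rfl fun k _ => by ring

section Rectangular

variable {n m : ℕ}

lemma minner_eq_trace (A B : Matrix (Fin n) (Fin m) ℝ) : minner A B = trace (A * Bᵀ) := by
  simp [minner, trace, mul_apply]

lemma minner_smul_right (A B : Matrix (Fin n) (Fin m) ℝ) (ρ : ℝ) :
    minner A (ρ • B) = ρ * minner A B := by
  simp only [minner_eq_trace, transpose_smul, Matrix.mul_smul, trace_smul, smul_eq_mul]

variable (hnm : n ≤ m)

def rectOne : Matrix (Fin n) (Fin m) ℝ :=
  (1 : Matrix (Fin m) (Fin m) ℝ).submatrix (Fin.castLE hnm) id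

lemma rectOne_mul {α : Type*} (M : Matrix (Fin m) α ℝ) :
    rectOne hnm * M = M.submatrix (Fin.castLE hnm) id := by
  ext i j; simp [rectOne, mul_apply, one_apply]

lemma mul_rectOne_transpose {α : Type*} (M : Matrix α (Fin m) ℝ) :
    M * (rectOne hnm)ᵀ = M.submatrix id (Fin.castLE hnm) := by
  ext i j; simp [rectOne, mul_apply, one_apply]

lemma rectOne_mul_mul_transpose (M : Matrix (Fin m) (Fin m) ℝ) :
    rectOne hnm * M * (rectOne hnm)ᵀ = M.submatrix (Fin.castLE hnm) (Fin.castLE hnm) := by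
  rw [mul_rectOne_transpose, rectOne_mul, submatrix_submatrix]; rfl

lemma rectOne_mul_transpose : rectOne hnm * (rectOne hnm)ᵀ = 1 := by
  ext i j; simp [rectOne, mul_apply, one_apply]

lemma minner_svd_eq {P U : Matrix (Fin n) (Fin n) ℝ} {Q V : Matrix (Fin m) (Fin m) ℝ}
    (a b : Fin n → ℝ) :
    minner (P * diagonal b * rectOne hnm * Qᵀ) (U * diagonal a * rectOne hnm * Vᵀ)
      = ∑ i, ∑ k, (Uᵀ * P) i k * (Qᵀ * V).submatrix (Fin.castLE hnm) (Fin.castLE hnm) k i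
          * (a i * b k) := by
  rw [minner_eq_trace, ← trace_mul_diagonal_mul_mul_diagonal, ← rectOne_mul_mul_transpose]
  set R := rectOne hnm
  calc trace (P * diagonal b * R * Qᵀ * (U * diagonal a * R * Vᵀ)ᵀ)
      = trace ((P * diagonal b * (R * (Qᵀ * V) * Rᵀ) * diagonal a) * Uᵀ) := by
        simp only [transpose_mul, transpose_transpose, diagonal_transpose, Matrix.mul_assoc]
    _ = trace (Uᵀ * P * diagonal b * (R * (Qᵀ * V) * Rᵀ) * diagonal a) := by
        rw [trace_mul_comm]; simp only [Matrix.mul_assoc]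

lemma minner_svd_self {U : Matrix (Fin n) (Fin n) ℝ} {V : Matrix (Fin m) (Fin m) ℝ}
    (hU : U ∈ orthogonalGroup (Fin n) ℝ) (hV : V ∈ orthogonalGroup (Fin m) ℝ)
    (a b : Fin n → ℝ) :
    minner (U * diagonal b * rectOne hnm * Vᵀ) (U * diagonal a * rectOne hnm * Vᵀ)
      = ∑ i, a i * b i := by
  rw [minner_svd_eq, (mem_orthogonalGroup_iff' _ ℝ).mp hU, (mem_orthogonalGroup_iff' _ ℝ).mp hV,
    submatrix_one _ (Fin.castLE_injective hnm)]
  simp [one_apply]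

lemma exists_mem_orthogonalGroup_eq_diagonal_mul_rectOne {Y : Matrix (Fin n) (Fin m) ℝ}
    {σ : Fin n → ℝ} (hY : Y * Yᵀ = diagonal fun i => σ i ^ 2) :
    ∃ V ∈ orthogonalGroup (Fin m) ℝ, Y = diagonal σ * rectOne hnm * Vᵀ := by
  have hdot : ∀ i j, Y j ⬝ᵥ Y i = if i = j then σ i ^ 2 else 0 := fun i j => by
    simpa [mul_apply, dotProduct, diagonal_apply, mul_comm] using congr_fun₂ hY i j
  have hzero : ∀ i, σ i = 0 → Y i = 0 := fun i h =>
    dotProduct_self_eq_zero.mp (by simp [hdot, h])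
  -- the normalised nonzero rows of `Y`, placed at the first `n` indices, are orthonormal
  set v : Fin m → EuclideanSpace ℝ (Fin m) :=
    Function.extend (Fin.castLE hnm) (fun i => (σ i)⁻¹ • WithLp.toLp 2 (Y i)) 0
  have hv : ∀ i, v (Fin.castLE hnm i) = (σ i)⁻¹ • WithLp.toLp 2 (Y i) := fun i =>
    (Fin.castLE_injective hnm).extend_apply _ _ i
  have hs : Orthonormal ℝ ((Fin.castLE hnm '' {i | σ i ≠ 0}).domRestrict v) := by
    rw [orthonormal_iff_ite]
    rintro ⟨_, i, hi, rfl⟩ ⟨_, j, hj, rfl⟩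
    simp only [Subtype.ext_iff, (Fin.castLE_injective hnm).eq_iff, domRestrict_apply, hv,
      real_inner_smul_left, real_inner_smul_right, EuclideanSpace.inner_toLp_toLp, star_trivial,
      hdot]
    split_ifs with h
    · subst h
      have : σ i ≠ 0 := hi
      field_simp
    · simp
  obtain ⟨b, hb⟩ := hs.exists_orthonormalBasis_extension_of_card_eq (by simp)
  refine ⟨_, (EuclideanSpace.basisFun (Fin m) ℝ).toMatrix_orthonormalBasis_mem_orthogonal b, ?_⟩
  ext i j
  rw [Matrix.mul_assoc, diagonal_mul, rectOne_mul]
  change Y i j = σ i * b (Fin.castLE hnm i) j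
  by_cases h : σ i = 0
  · simp [h, hzero i h]
  · rw [hb _ ⟨i, h, rfl⟩, hv]
    simp [h]

end Rectangular

section SingularValues

variable {n m : ℕ} (hnm : n ≤ m)

lemma singVals_nonneg (X : Matrix (Fin n) (Fin m) ℝ) (i : Fin n) : 0 ≤ singVals X i :=
  Real.sqrt_nonneg _

lemma sq_singVals (X : Matrix (Fin n) (Fin m) ℝ) (i : Fin n) :
    singVals X i ^ 2 = (isHermitian_mul_conjTranspose_self X).eigenvalues i :=
  Real.sq_sqrt (eigenvalues_self_mul_conjTranspose_nonneg X i)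

lemma exists_svd (X : Matrix (Fin n) (Fin m) ℝ) :
    ∃ U ∈ orthogonalGroup (Fin n) ℝ, ∃ V ∈ orthogonalGroup (Fin m) ℝ,
      X = U * diagonal (singVals X) * rectOne hnm * Vᵀ := by
  set hH := isHermitian_mul_conjTranspose_self X
  set U : Matrix (Fin n) (Fin n) ℝ := ↑hH.eigenvectorUnitary
  have hU : U ∈ orthogonalGroup (Fin n) ℝ := hH.eigenvectorUnitary.2
  have hY : Uᵀ * X * (Uᵀ * X)ᵀ = diagonal fun i => singVals X i ^ 2 := by
    have hdiag := hH.conjStarAlgAut_star_eigenvectorUnitary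
    simp only [Unitary.conjStarAlgAut_star_apply, RCLike.ofReal_real_eq_id, Function.id_comp,
      star_eq_conjTranspose, conjTranspose_eq_transpose_of_trivial] at hdiag
    simp only [sq_singVals]
    rw [← hdiag, transpose_mul, transpose_transpose]
    simp only [U, Matrix.mul_assoc]
    rfl
  obtain ⟨V, hV, hUX⟩ := exists_mem_orthogonalGroup_eq_diagonal_mul_rectOne hnm hY
  refine ⟨U, hU, V, hV, ?_⟩
  rw [Matrix.mul_assoc U, Matrix.mul_assoc U, ← hUX, ← Matrix.mul_assoc,
    (mem_orthogonalGroup_iff _ ℝ).mp hU, Matrix.one_mul]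

lemma map_singVals_svd {U : Matrix (Fin n) (Fin n) ℝ} {V : Matrix (Fin m) (Fin m) ℝ}
    (hU : U ∈ orthogonalGroup (Fin n) ℝ) (hV : V ∈ orthogonalGroup (Fin m) ℝ) {t : Fin n → ℝ}
    (ht : ∀ i, 0 ≤ t i) :
    Multiset.map (singVals (U * diagonal t * rectOne hnm * Vᵀ)) Finset.univ.val
      = Multiset.map t Finset.univ.val := by
  set W := U * diagonal t * rectOne hnm * Vᵀ
  have hWW : W * Wᴴ = U * diagonal (fun i => t i * t i) * Uᵀ := by
    calc W * Wᴴ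
        = U * diagonal t * (rectOne hnm * (Vᵀ * V) * (rectOne hnm)ᵀ) * diagonal t * Uᵀ := by
          simp only [W, conjTranspose_eq_transpose_of_trivial, transpose_mul, transpose_transpose,
            diagonal_transpose, Matrix.mul_assoc]
      _ = U * diagonal (fun i => t i * t i) * Uᵀ := by
          rw [(mem_orthogonalGroup_iff' _ ℝ).mp hV, Matrix.mul_one, rectOne_mul_transpose,
            Matrix.mul_one, Matrix.mul_assoc U, diagonal_mul_diagonal]
  calc Multiset.map (singVals W) Finset.univ.val
      = Multiset.map Real.sqrt (Multiset.map (isHermitian_mul_conjTranspose_self W).eigenvalues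
          Finset.univ.val) := by rw [Multiset.map_map]; rfl
    _ = Multiset.map t Finset.univ.val := by
        rw [map_eigenvalues_eq_of_eq_conj _ hU hWW, Multiset.map_map]
        exact Multiset.map_congr rfl fun i _ => Real.sqrt_mul_self (ht i)

end SingularValues

section Conjugate

variable {n m : ℕ} {φ : ℝ → ℝ}

lemma minner_sub_sum_le_sum_psiStar (hnm : n ≤ m) (hφ : ContinuousOn φ (Icc 0 1)) {ρ : ℝ}
    (hρ : 0 ≤ ρ) (X W : Matrix (Fin n) (Fin m) ℝ) (hW : ∀ i, singVals W i ≤ 1) :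
    minner W (ρ • X) - ∑ k, φ (singVals W k) ≤ ∑ i, psiStar φ (ρ * singVals X i) := by
  obtain ⟨U, hU, V, hV, hX⟩ := exists_svd hnm X
  obtain ⟨P, hP, Q, hQ, hWsvd⟩ := exists_svd hnm W
  set K := (Qᵀ * V).submatrix (Fin.castLE hnm) (Fin.castLE hnm)
  have hG := transpose_mul_mem_orthogonalGroup hU hP
  have hQV := transpose_mul_mem_orthogonalGroup hQ hV
  obtain ⟨D, hD, hMD⟩ := exists_mem_doublyStochastic_abs_mul_le (A := Uᵀ * P) (B := K)
    (fun i => (sum_sq_row_of_mem_orthogonalGroup hG i).le)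
    (fun k => (sum_sq_col_of_mem_orthogonalGroup hG k).le)
    (sum_sq_submatrix_row_le_one hQV _ (Fin.castLEEmb hnm))
    (sum_sq_submatrix_col_le_one hQV (Fin.castLEEmb hnm) _)
  have hinner : minner W (ρ • X)
      = ∑ i, ∑ k, (Uᵀ * P) i k * K k i * (ρ * singVals X i * singVals W k) := by
    rw [minner_smul_right, congr_arg₂ minner hWsvd hX, minner_svd_eq]
    simp only [Finset.mul_sum]
    exact Finset.sum_congr rfl fun i _ => Finset.sum_congr rfl fun k _ => by ring
  rw [hinner]
  exact sum_mul_sub_le_sum_psiStar hφ hD hMD (fun i => mul_nonneg hρ (singVals_nonneg X i))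
    fun k => ⟨singVals_nonneg W k, hW k⟩

lemma exists_minner_sub_sum_eq_sum_psiStar (hnm : n ≤ m) (hφ : ContinuousOn φ (Icc 0 1))
    (ρ : ℝ) (X : Matrix (Fin n) (Fin m) ℝ) :
    ∃ W : Matrix (Fin n) (Fin m) ℝ, (∀ i, singVals W i ≤ 1) ∧
      minner W (ρ • X) - ∑ i, φ (singVals W i) = ∑ i, psiStar φ (ρ * singVals X i) := by
  obtain ⟨U, hU, V, hV, hX⟩ := exists_svd hnm X
  choose τ hτ hτeq using fun i => (isGreatest_psiStar hφ (ρ * singVals X i)).1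
  have hmap := map_singVals_svd hnm hU hV fun i => (hτ i).1
  refine ⟨U * diagonal τ * rectOne hnm * Vᵀ, fun i => ?_, ?_⟩
  · obtain ⟨j, -, hj⟩ := Multiset.mem_map.mp
      (hmap ▸ Multiset.mem_map_of_mem _ (Finset.mem_univ_val i))
    exact hj ▸ (hτ j).2
  · have hφsum :
        ∑ i, φ (singVals (U * diagonal τ * rectOne hnm * Vᵀ) i) = ∑ i, φ (τ i) := by
      simpa only [Multiset.map_map, Function.comp_def, ← Finset.sum_eq_multiset_sum] using
        congrArg (fun s => (s.map φ).sum) hmap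
    rw [hφsum, minner_smul_right, congrArg (minner _) hX, minner_svd_self hnm hU hV,
      Finset.mul_sum, ← Finset.sum_sub_distrib]
    exact Finset.sum_congr rfl fun i _ => by rw [hτeq i]; ring

end Conjugate

/-- for `ψ` equal to a convex `φ` on `[0,1]` and `+∞` elsewhere, and any
`ρ > 0` and matrix `X`,
`sup_W {⟨W, ρX⟩ − ∑_i ψ(σ_i(W))} = ∑_i ψ*(ρ·σ_i(X))`; since `ψ = +∞` off `[0,1]`
and `σ_i(W) ≥ 0`, the supremum is over the `W` with all singular values `≤ 1`. -/
theorem stmt17 (n m : ℕ) (hnm : n ≤ m) (φ : ℝ → ℝ)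
    (hφ : ConvexOn ℝ Set.univ φ) (ρ : ℝ) (hρ : 0 < ρ)
    (X : Matrix (Fin n) (Fin m) ℝ) :
    sSup {v : ℝ | ∃ W : Matrix (Fin n) (Fin m) ℝ, (∀ i, singVals W i ≤ 1) ∧
        v = minner W (ρ • X) - ∑ i, φ (singVals W i)} =
      ∑ i, psiStar φ (ρ * singVals X i) := by
  have hφc : ContinuousOn φ (Icc 0 1) := (hφ.continuousOn isOpen_univ).mono (subset_univ _)
  obtain ⟨W₀, hW₀, hW₀eq⟩ := exists_minner_sub_sum_eq_sum_psiStar hnm hφc ρ X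
  refine IsGreatest.csSup_eq ⟨⟨W₀, hW₀, hW₀eq.symm⟩, ?_⟩
  rintro _ ⟨W, hW, rfl⟩
  exact minner_sub_sum_le_sum_psiStar hnm hφc hρ.le X W hW
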